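/- (Mirsky–Newman) If k ≥ 2 arithmetic progressions in ℤ are pairwise disjoint and their union is ℤ, then two of them have the same common difference. -/

import Mathlib

/-- Arithmetic progression in ℤ with offset `a` and difference `n`. -/
def AP (a n : ℤ) : Set ℤ := {x : ℤ | ∃ m : ℤ, x = a + m * n}

/-!
Let `ζ` be a primitive root of unity whose order `d` is the largest difference, and sum `ζ ^ x`
over `0 ≤ x < N`, where `N` is the product of all differences. The total vanishes because
`ζ ^ N = 1 ≠ ζ`. The progression with difference `n` contributes `ζ ^ r * ∑ t < N / n, (ζ ^ n) ^ t`,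
which vanishes unless `d ∣ n`. If the differences were distinct, only the progression with
difference `d` would survive, and it contributes `ζ ^ r * (N / d) ≠ 0`.
-/

open Finset Function

theorem mem_AP_iff_modEq {a n x : ℤ} : x ∈ AP a n ↔ x ≡ a [ZMOD n] := by
  rw [Int.modEq_comm, Int.modEq_iff_dvd]
  constructor
  · rintro ⟨m, rfl⟩
    exact ⟨m, by ring⟩
  · rintro ⟨m, hm⟩
    exact ⟨m, by linarith⟩

instance decidableMemAP (a n x : ℤ) : Decidable (x ∈ AP a n) :=
  decidable_of_iff _ mem_AP_iff_modEq.symm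

theorem sum_eq_sum_sum_filter_of_existsUnique {ι α M : Type*} [Fintype ι] [AddCommMonoid M]
    (p : ι → α → Prop) [∀ i, DecidablePred (p i)] (hp : ∀ x, ∃! i, p i x) (s : Finset α)
    (f : α → M) : ∑ x ∈ s, f x = ∑ i, ∑ x ∈ s with p i x, f x := by
  choose c hc hc_unique using hp
  have hp_iff : ∀ i x, p i x ↔ c x = i := fun i x =>
    ⟨fun h => (hc_unique x i h).symm, fun h => h ▸ hc x⟩
  classical
  simp_rw [hp_iff]
  exact (sum_fiberwise s c f).symm

theorem existsUnique_mem_of_pairwise_disjoint {ι α : Type*} {S : ι → Set α}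
    (hdisj : Pairwise (Disjoint on S)) (hcover : ⋃ i, S i = Set.univ) (x : α) : ∃! i, x ∈ S i :=
  (Set.mem_iUnion.1 (hcover ▸ Set.mem_univ x)).elim fun i hi =>
    ⟨i, hi, fun _ hj => by_contra fun hji => (hdisj hji).ne_of_mem hj hi rfl⟩

theorem geom_sum_eq_zero_of_pow_eq_one {K : Type*} [DivisionRing K] {w : K} {m : ℕ}
    (hw : w ≠ 1) (hm : w ^ m = 1) : ∑ t ∈ range m, w ^ t = 0 := by
  rw [geom_sum_eq hw, hm, sub_self, zero_div]

theorem sum_range_mul_filter_mod_eq {R : Type*} [CommSemiring R] (ζ : R) {n r : ℕ} (hr : r < n)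
    (q : ℕ) : ∑ x ∈ range (n * q) with x % n = r, ζ ^ x = ζ ^ r * ∑ t ∈ range q, (ζ ^ n) ^ t := by
  induction q with
  | zero => simp
  | succ q ih =>
    rw [mul_add_one, sum_filter, sum_range_add, ← sum_filter, ih, sum_range_succ, mul_add]
    congr 1
    have hblock : ∀ x ∈ range n, (if (n * q + x) % n = r then ζ ^ (n * q + x) else 0)
        = if r = x then ζ ^ (n * q + r) else 0 := by
      intro x hx
      rw [Nat.mul_add_mod, Nat.mod_eq_of_lt (mem_range.1 hx)]
      rcases eq_or_ne x r with rfl | h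
      · simp
      · simp [h, h.symm]
    rw [sum_congr rfl hblock, sum_ite_eq, if_pos (mem_range.2 hr), pow_add, pow_mul]
    ring

theorem sum_range_filter_natCast_mem_AP {R : Type*} [CommSemiring R] (ζ : R) (a : ℤ) {n N : ℕ}
    (hn : 0 < n) (hnN : n ∣ N) :
    ∃ r, ∑ x ∈ range N with ((x : ℕ) : ℤ) ∈ AP a n, ζ ^ x =
      ζ ^ r * ∑ t ∈ range (N / n), (ζ ^ n) ^ t := by
  obtain ⟨q, rfl⟩ := hnN
  have ha : 0 ≤ a % n := Int.emod_nonneg a (by omega)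
  have ha' : a % n < n := Int.emod_lt_of_pos a (by omega)
  refine ⟨(a % n).toNat, ?_⟩
  rw [Nat.mul_div_cancel_left q hn, ← sum_range_mul_filter_mod_eq ζ (by omega)]
  refine sum_congr (filter_congr fun x _ => ?_) fun _ _ => rfl
  rw [mem_AP_iff_modEq, Int.ModEq]
  omega

theorem not_injective_of_AP_partition {ι : Type*} [Fintype ι] [Nontrivial ι] (a n : ι → ℤ)
    (hn : ∀ i, 0 < n i) (hdisj : Pairwise (Disjoint on fun i => AP (a i) (n i)))
    (hcover : ⋃ i, AP (a i) (n i) = Set.univ) : ¬ Injective n := by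
  lift n to ι → ℕ using fun i => (hn i).le
  simp only [Nat.cast_pos] at hn
  intro hinj
  replace hinj : Injective n := fun i j h => hinj (by simp [h])
  obtain ⟨M, hM⟩ := Finite.exists_max n
  obtain ⟨j, hj⟩ := exists_ne M
  have hM1 : 1 < n M := lt_of_le_of_lt (hn j) ((hM j).lt_of_ne (hinj.ne hj))
  set ζ : ℂ := Complex.exp (2 * Real.pi * Complex.I / n M)
  have hζ : IsPrimitiveRoot ζ (n M) := Complex.isPrimitiveRoot_exp _ (by omega)
  have hζ_pow : ∀ i, ζ ^ n i = 1 ↔ i = M := fun i =>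
    ⟨fun h => hinj (Nat.le_antisymm (hM i) (Nat.le_of_dvd (hn i) (hζ.dvd_of_pow_eq_one _ h))),
      fun h => h ▸ hζ.pow_eq_one⟩
  set N := ∏ i, n i
  have hdvd : ∀ i, n i ∣ N := fun i => dvd_prod_of_mem n (mem_univ i)
  have hζN : ζ ^ N = 1 := (hζ.pow_eq_one_iff_dvd N).2 (hdvd M)
  choose r hr using fun i => sum_range_filter_natCast_mem_AP ζ (a i) (hn i) (hdvd i)
  have hfiber : ∀ i ≠ M, ∑ x ∈ range N with ((x : ℕ) : ℤ) ∈ AP (a i) (n i), ζ ^ x = 0 := by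
    intro i hi
    rw [hr i, geom_sum_eq_zero_of_pow_eq_one ((hζ_pow i).not.2 hi)
      (by rw [← pow_mul, Nat.mul_div_cancel' (hdvd i), hζN]), mul_zero]
  have hsplit := sum_eq_sum_sum_filter_of_existsUnique (fun i (x : ℕ) => (x : ℤ) ∈ AP (a i) (n i))
    (fun x => existsUnique_mem_of_pairwise_disjoint hdisj hcover x) (range N) (ζ ^ ·)
  rw [geom_sum_eq_zero_of_pow_eq_one (hζ.ne_one hM1) hζN,
    sum_eq_single M (fun i _ hi => hfiber i hi) (by simp), hr M, (hζ_pow M).2 rfl] at hsplit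
  simp only [one_pow, sum_const, card_range, nsmul_eq_mul, mul_one] at hsplit
  have hq : 0 < N / n M := Nat.div_pos (Nat.le_of_dvd (prod_pos fun i _ => hn i) (hdvd M)) (hn M)
  exact mul_ne_zero (pow_ne_zero _ (hζ.ne_zero (by omega))) (Nat.cast_ne_zero.2 hq.ne') hsplit.symm

theorem mirsky_newman (k : ℕ) (hk : 2 ≤ k) (a n : Fin k → ℤ)
    (hn : ∀ i, 1 ≤ n i)
    (hdisj : ∀ i j, i ≠ j → Disjoint (AP (a i) (n i)) (AP (a j) (n j)))
    (hcover : (⋃ i, AP (a i) (n i)) = Set.univ) :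
    ∃ i j, i ≠ j ∧ n i = n j := by
  have : Nontrivial (Fin k) := Fin.nontrivial_iff_two_le.2 hk
  obtain ⟨i, j, hij, hne⟩ :=
    not_injective_iff.1 (not_injective_of_AP_partition a n hn (fun i j => hdisj i j) hcover)
  exact ⟨i, j, hne, hij⟩
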